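/- arXiv:2101.07847 — 3 statements merged into one kernel-verified Lean document; each statement's English description precedes it below -/
import Mathlib

section
/- For every quantifier-free HyperLTL formula ψ over AP and trace variables π_1, …, π_k, let ψ' be the formula over the single trace variable π and atomic propositions AP × {1,…,k} obtained by replacing every atom a_{π_i} with (a,i)_π. Then for all traces t_1, …, t_k ∈ (2^AP)^ω, the assignment (i ↦ t_i) satisfies ψ if and only if the single-trace assignment π ↦ merge(t_1,…,t_k) satisfies ψ'. Consequently, for every Kripke structure K and its k-fold self-composition K': K ⊨ ∃π_1 … ∃π_k. ψ if and only if some trace t' ∈ Traces(K') satisfies ψ'. -/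
/-- A Kripke structure. -/
structure Kripke (S : Type*) (AP : Type*) where
  init : S
  rel : S → S → Prop
  serial : ∀ s, ∃ s', rel s s'
  label : S → Set AP

def Kripke.IsPath {S AP : Type*} (K : Kripke S AP) (p : ℕ → S) : Prop :=
  p 0 = K.init ∧ ∀ i, K.rel (p i) (p (i + 1))

def Kripke.traces {S AP : Type*} (K : Kripke S AP) : Set (ℕ → Set AP) :=
  {t | ∃ p, K.IsPath p ∧ t = fun i => K.label (p i)}

/-- The `k`-fold self-composition of `K`. -/
def Kripke.selfComp {S AP : Type*} (K : Kripke S AP) (k : ℕ) :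
    Kripke (Fin k → S) (AP × Fin k) where
  init := fun _ => K.init
  rel := fun g g' => ∀ i, K.rel (g i) (g' i)
  serial := fun g =>
    ⟨fun i => (K.serial (g i)).choose, fun i => (K.serial (g i)).choose_spec⟩
  label := fun g => {x | x.1 ∈ K.label (g x.2)}

/-- The merge of `k` traces into a single trace over `AP × Fin k`. -/
def merge {AP : Type*} {k : ℕ} (t : Fin k → ℕ → Set AP) : ℕ → Set (AP × Fin k) :=
  fun m => {x | x.1 ∈ t x.2 m}

/-- Quantifier-free HyperLTL formulas over atomic propositions `AP` and
trace variables `π_1, …, π_n`. -/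
inductive QF (AP : Type*) (n : ℕ) where
  | tt : QF AP n
  | atom : AP → Fin n → QF AP n
  | neg : QF AP n → QF AP n
  | disj : QF AP n → QF AP n → QF AP n
  | next : QF AP n → QF AP n
  | untl : QF AP n → QF AP n → QF AP n

/-- `shift Pa j` is the trace assignment `Π[j,∞]`. -/
def shift {AP : Type*} {n : ℕ} (Pa : Fin n → ℕ → Set AP) (j : ℕ) :
    Fin n → ℕ → Set AP :=
  fun i m => Pa i (m + j)

/-- Satisfaction of a quantifier-free HyperLTL formula by a trace assignment. -/
def QF.Sat {AP : Type*} {n : ℕ} : QF AP n → (Fin n → ℕ → Set AP) → Prop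
  | .tt, _ => True
  | .atom a i, Pa => a ∈ Pa i 0
  | .neg ψ, Pa => ¬ ψ.Sat Pa
  | .disj ψ₁ ψ₂, Pa => ψ₁.Sat Pa ∨ ψ₂.Sat Pa
  | .next ψ, Pa => ψ.Sat (shift Pa 1)
  | .untl ψ₁ ψ₂, Pa =>
      ∃ i, ψ₂.Sat (shift Pa i) ∧ ∀ j < i, ψ₁.Sat (shift Pa j)

/-- The projection `ψ'` of `ψ` to a single trace variable over `AP × Fin k`,
replacing each atom `a_{π_i}` with `(a, i)_π`. -/
def QF.proj {AP : Type*} {k : ℕ} : QF AP k → QF (AP × Fin k) 1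
  | .tt => .tt
  | .atom a i => .atom (a, i) 0
  | .neg ψ => .neg ψ.proj
  | .disj ψ₁ ψ₂ => .disj ψ₁.proj ψ₂.proj
  | .next ψ => .next ψ.proj
  | .untl ψ₁ ψ₂ => .untl ψ₁.proj ψ₂.proj


lemma shift_merge {AP : Type*} {k : ℕ} (t : Fin k → ℕ → Set AP) (j : ℕ) :
    shift (fun _ : Fin 1 => merge t) j = fun _ => merge (shift t j) := by
  funext i m
  rfl

lemma sat_proj {AP : Type*} {k : ℕ} (ψ : QF AP k) (t : Fin k → ℕ → Set AP) :
    ψ.Sat t ↔ ψ.proj.Sat (fun _ => merge t) := by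
  induction ψ generalizing t with
  | tt => simp [QF.Sat, QF.proj]
  | atom a i => simp [QF.Sat, QF.proj, merge]
  | neg ψ ih => simp [QF.Sat, QF.proj, ih]
  | disj ψ₁ ψ₂ ih₁ ih₂ => simp [QF.Sat, QF.proj, ih₁, ih₂]
  | next ψ ih => simp [QF.Sat, QF.proj, shift_merge, ih]
  | untl ψ₁ ψ₂ ih₁ ih₂ => simp [QF.Sat, QF.proj, shift_merge, ih₁, ih₂]

lemma traces_selfComp {AP S : Type*} {k : ℕ} (K : Kripke S AP)
    (t' : ℕ → Set (AP × Fin k)) :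
    t' ∈ (K.selfComp k).traces ↔
      ∃ t : Fin k → ℕ → Set AP, (∀ i, t i ∈ K.traces) ∧ t' = merge t := by
  constructor
  · rintro ⟨p, ⟨h0, hrel⟩, rfl⟩
    refine ⟨fun i n => K.label (p n i), fun i => ⟨fun n => p n i, ⟨?_, fun n => hrel n i⟩, rfl⟩, ?_⟩
    · exact congrFun h0 i
    · funext m; rfl
  · rintro ⟨t, ht, rfl⟩
    choose p hp hte using ht
    refine ⟨fun n i => p i n, ⟨funext fun i => (hp i).1, fun n i => (hp i).2 n⟩, ?_⟩
    funext m
    ext x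
    show x.1 ∈ t x.2 m ↔ x.1 ∈ K.label (p x.2 m)
    rw [hte x.2]

theorem selfComposition_correct {AP : Type*} {k : ℕ} :
    (∀ (ψ : QF AP k) (t : Fin k → ℕ → Set AP),
      ψ.Sat t ↔ ψ.proj.Sat (fun _ => merge t)) ∧
    (∀ {S : Type*} (K : Kripke S AP) (ψ : QF AP k),
      (∃ t : Fin k → ℕ → Set AP, (∀ i, t i ∈ K.traces) ∧ ψ.Sat t) ↔
      (∃ t' ∈ (K.selfComp k).traces, ψ.proj.Sat (fun _ => t'))) := by
  refine ⟨sat_proj, fun K ψ => ?_⟩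
  constructor
  · rintro ⟨t, ht, hsat⟩
    exact ⟨merge t, (traces_selfComp K _).2 ⟨t, ht, rfl⟩, (sat_proj ψ t).1 hsat⟩
  · rintro ⟨t', ht', hsat⟩
    obtain ⟨t, ht, rfl⟩ := (traces_selfComp K t').1 ht'
    exact ⟨t, ht, (sat_proj ψ t).2 hsat⟩
end

section
/- Let K = (S, s_init, δ, L) be a Kripke structure whose frame (S, δ) is acyclic, and let n = |S|. Then for every path p of K there exists N < n such that p(N) is terminal and p(i) = p(N) for all i ≥ N. Consequently, every trace t ∈ Traces(K) is eventually constant: there is N < n with t(i) = t(N) for all i ≥ N. -/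
/-- A state `s` is terminal for `δ` if `s` is its only `δ`-successor. -/
def Terminal {S : Type*} (δ : S → S → Prop) (s : S) : Prop :=
  δ s s ∧ ∀ s', δ s s' → s' = s

/-- The frame `(S, δ)` is acyclic: every loop consists of equal states and
its state is terminal. -/
def Acyclic {S : Type*} (δ : S → S → Prop) : Prop :=
  ∀ (n : ℕ) (f : ℕ → S),
    (∀ i < n, δ (f i) (f (i + 1))) → δ (f n) (f 0) →
      (∀ i ≤ n, f i = f 0) ∧ Terminal δ (f 0)

theorem acyclic_paths_stabilize {S AP : Type*} [Fintype S]
    (K : Kripke S AP) (hacyc : Acyclic K.rel) :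
    (∀ p : ℕ → S, K.IsPath p →
      ∃ N < Fintype.card S, Terminal K.rel (p N) ∧ ∀ i ≥ N, p i = p N) ∧
    (∀ t ∈ K.traces, ∃ N < Fintype.card S, ∀ i ≥ N, t i = t N) := by
  have main : ∀ p : ℕ → S, K.IsPath p →
      ∃ N < Fintype.card S, Terminal K.rel (p N) ∧ ∀ i ≥ N, p i = p N := by
    intro p hp
    -- pigeonhole on Fin (card S + 1)
    have hni : ¬ Function.Injective (fun i : Fin (Fintype.card S + 1) => p i.val) := by
      intro hinj
      have := Fintype.card_le_of_injective _ hinj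
      simp at this
    rw [Function.not_injective_iff] at hni
    obtain ⟨a, b, hab, hne⟩ := hni
    wlog hlt : a < b generalizing a b
    · exact this b a hab.symm (Ne.symm hne) (lt_of_le_of_ne (not_lt.mp hlt) (by simpa using hne.symm))
    set A := (a : ℕ)
    set B := (b : ℕ)
    have hAB : A < B := hlt
    have hBle : B ≤ Fintype.card S := Nat.lt_succ_iff.mp b.isLt
    -- loop f i = p (A + i), length n = B - 1 - A
    have hn : A + (B - 1 - A) + 1 = B := by omega
    have hloop := hacyc (B - 1 - A) (fun i => p (A + i))
      (fun i _ => by simpa [Nat.add_assoc] using hp.2 (A + i))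
      (by
        have := hp.2 (A + (B - 1 - A))
        rw [hn] at this
        have hab' : p B = p A := hab.symm
        rw [hab'] at this
        simpa using this)
    obtain ⟨-, hterm⟩ := hloop
    simp only [Nat.add_zero] at hterm
    refine ⟨A, lt_of_lt_of_le hAB hBle, hterm, ?_⟩
    intro i hi
    obtain ⟨k, rfl⟩ := Nat.exists_eq_add_of_le hi
    induction k with
    | zero => rfl
    | succ k ih =>
      have := hp.2 (A + k)
      rw [ih (by omega)] at this
      have := hterm.2 _ this
      exact this
  refine ⟨main, ?_⟩
  rintro t ⟨p, hp, rfl⟩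
  obtain ⟨N, hN, -, hstab⟩ := main p hp
  exact ⟨N, hN, fun i hi => by simp [hstab i hi]⟩
end

section
/- Let AP = {x}, let t⊤ be the trace with t⊤(0) = ∅ and t⊤(i) = {x} for all i ≥ 1, let t⊥ be the trace with t⊥(i) = ∅ for all i, and let T = {t⊤, t⊥}. Let B be a Boolean formula over propositional variables x_1, …, x_n (built from variables, negation, and disjunction), and let ψ' be the quantifier-free HyperLTL formula over trace variables π_1, …, π_n obtained from B by replacing each occurrence of x_i with ◯ x_{π_i} and keeping the Boolean connectives. Then: (1) for every b ∈ {true,false}^n, the assignment Π_b with Π_b(i) = t⊤ if b_i = true and Π_b(i) = t⊥ if b_i = false satisfies Π_b ⊨ ψ' if and only if B evaluates to true under b; and (2) for every quantifier prefix Q_1, …, Q_n ∈ {∃, ∀}: T ⊨ Q_1 π_1 … Q_n π_n. ψ' if and only if Q_1 b_1 ∈ {true,false} … Q_n b_n ∈ {true,false}. B(b_1, …, b_n) = true. -/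
/-- Boolean formulas over variables `x_1, …, x_n`, built from variables,
negation, and disjunction. -/
inductive BF (n : ℕ) where
  | var : Fin n → BF n
  | neg : BF n → BF n
  | disj : BF n → BF n → BF n

/-- Evaluation of a Boolean formula under an assignment. -/
def BF.eval {n : ℕ} (b : Fin n → Bool) : BF n → Bool
  | .var i => b i
  | .neg B => !(B.eval b)
  | .disj B₁ B₂ => (B₁.eval b) || (B₂.eval b)

/-- Translation of a Boolean formula to a quantifier-free HyperLTL formula:
each occurrence of `x_i` is replaced by `◯ x_{π_i}` (here `AP = {x}` is the
one-element type `Unit`). -/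
def BF.toQF {n : ℕ} : BF n → QF Unit n
  | .var i => .next (.atom () i)
  | .neg B => .neg B.toQF
  | .disj B₁ B₂ => .disj B₁.toQF B₂.toQF

/-- `Quant S n Q P`: the quantified statement
`Q_1 t_1 ∈ S … Q_n t_n ∈ S. P (t_1, …, t_n)`, where `Q i = true` stands for
`∃` and `Q i = false` for `∀`. -/
def Quant {α : Type*} (S : Set α) : (n : ℕ) → (Fin n → Bool) →
    ((Fin n → α) → Prop) → Prop
  | 0, _, P => P (fun i => i.elim0)
  | n + 1, Q, P =>
    if Q 0 then
      ∃ t ∈ S, Quant S n (fun i => Q i.succ) (fun f => P (Fin.cons t f))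
    else
      ∀ t ∈ S, Quant S n (fun i => Q i.succ) (fun f => P (Fin.cons t f))

/-- The trace `t⊤` with `t⊤(0) = ∅` and `t⊤(i) = {x}` for `i ≥ 1`. -/
def ttop : ℕ → Set Unit := fun i => if i = 0 then ∅ else {()}

/-- The trace `t⊥` with `t⊥(i) = ∅` for all `i`. -/
def tbot : ℕ → Set Unit := fun _ => ∅


lemma sat_iff {n : ℕ} (B : BF n) (b : Fin n → Bool) :
    B.toQF.Sat (fun i => if b i then ttop else tbot) ↔ B.eval b = true := by
  induction B with
  | var i =>
    simp only [BF.toQF, QF.Sat, BF.eval, shift]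
    cases h : b i <;> simp [h, ttop, tbot]
  | neg B ih => simp [BF.toQF, QF.Sat, BF.eval, ih]
  | disj B₁ B₂ ih₁ ih₂ => simp [BF.toQF, QF.Sat, BF.eval, ih₁, ih₂]

lemma quant_equiv : ∀ (n : ℕ) (Q : Fin n → Bool)
    (P : (Fin n → ℕ → Set Unit) → Prop) (P' : (Fin n → Bool) → Prop),
    (∀ b, P (fun i => if b i then ttop else tbot) ↔ P' b) →
    (Quant ({ttop, tbot} : Set (ℕ → Set Unit)) n Q P ↔
      Quant (Set.univ : Set Bool) n Q P')
  | 0, Q, P, P', H => by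
      simp only [Quant]
      have h := H (fun i => i.elim0)
      have e : (fun i : Fin 0 => if ((fun j : Fin 0 => j.elim0 : Fin 0 → Bool)) i then ttop else tbot)
          = (fun i : Fin 0 => (i.elim0 : ℕ → Set Unit)) := funext fun i => i.elim0
      rwa [e] at h
  | n+1, Q, P, P', H => by
      have key : ∀ (c : Bool) (b : Fin n → Bool),
          Fin.cons (α := fun _ => ℕ → Set Unit)
            (if c then ttop else tbot) (fun i => if b i then ttop else tbot)
          = fun i => if (Fin.cons (α := fun _ => Bool) c b) i then ttop else tbot := by
        intro c b; funext i
        refine Fin.cases ?_ ?_ i <;> simp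
      have step : ∀ (c : Bool),
          Quant ({ttop, tbot} : Set (ℕ → Set Unit)) n (fun i => Q i.succ)
            (fun f => P (Fin.cons (if c then ttop else tbot) f)) ↔
          Quant (Set.univ : Set Bool) n (fun i => Q i.succ)
            (fun g => P' (Fin.cons c g)) := by
        intro c
        refine quant_equiv n _ _ _ ?_
        intro b
        rw [key c b]; exact H _
      simp only [Quant]
      by_cases hQ : Q 0 = true
      · simp only [hQ, if_true]
        constructor
        · rintro ⟨t, ht, hq⟩
          simp only [Set.mem_insert_iff, Set.mem_singleton_iff] at ht
          rcases ht with rfl | rfl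
          · exact ⟨true, Set.mem_univ _, (step true).mp (by simpa using hq)⟩
          · exact ⟨false, Set.mem_univ _, (step false).mp (by simpa using hq)⟩
        · rintro ⟨c, -, hq⟩
          refine ⟨if c then ttop else tbot, ?_, (step c).mpr hq⟩
          cases c <;> simp
      · simp only [hQ, if_false]
        constructor
        · intro h c _
          refine (step c).mp (h _ ?_)
          cases c <;> simp
        · intro h t ht
          simp only [Set.mem_insert_iff, Set.mem_singleton_iff] at ht
          rcases ht with rfl | rfl
          · have := (step true).mpr (h true (Set.mem_univ _))
            simpa using this
          · have := (step false).mpr (h false (Set.mem_univ _))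
            simpa using this

theorem qbf_reduction_correct {n : ℕ} (B : BF n) :
    (∀ b : Fin n → Bool,
      B.toQF.Sat (fun i => if b i then ttop else tbot) ↔ B.eval b = true) ∧
    (∀ Q : Fin n → Bool,
      Quant ({ttop, tbot} : Set (ℕ → Set Unit)) n Q (fun t => B.toQF.Sat t) ↔
      Quant (Set.univ : Set Bool) n Q (fun b => B.eval b = true)) := by
  constructor
  · exact sat_iff B
  · intro Q
    exact quant_equiv n Q _ _ (sat_iff B)
end
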